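/- Let Z be a finite set with |Z| = D ≥ 1, let γ > 1, let A be the γ-diagonal matrix on Z, and fix z ∈ Z^m. Let Ŵ = (Ŵ_1,…,Ŵ_m) have independent components with P(Ŵ_i = w) = A[w, z_i]. Then the expected PRAM estimation error satisfies E‖A⁻¹·T_{Ŵ} − T_z‖₂ ≤ c·√(D/m), where c = 1 + D/(γ − 1) is the ℓ2 condition number of A. -/

import Mathlib

open Finset Matrix

/-- The γ-diagonal PRAM matrix on a finite alphabet `Z`. -/
noncomputable def gammaDiag {Z : Type*} [Fintype Z] [DecidableEq Z] (γ : ℝ) (w z : Z) : ℝ :=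
  if w = z then γ / (γ + (Fintype.card Z : ℝ) - 1) else 1 / (γ + (Fintype.card Z : ℝ) - 1)

/-- The type (empirical distribution) of a sequence `z ∈ Z^m`. -/
noncomputable def typeOf {Z : Type*} [DecidableEq Z] {m : ℕ} (z : Fin m → Z) : Z → ℝ :=
  fun a => ((Finset.univ.filter fun i => z i = a).card : ℝ) / m

/-!
Write `pᵢ = A[·, zᵢ]` for the law of `Ŵᵢ`. The type `T_Ŵ` has mean `A T_z` and `A` preserves
total mass, so `T_Ŵ - A T_z` has mass zero. On mass-zero vectors `A` acts as multiplication by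
`(γ - 1) / (γ + D - 1) = 1 / c`, whence `A⁻¹ T_Ŵ - T_z = c (T_Ŵ - A T_z)`. By Jensen, `E‖T_Ŵ - A T_z‖ ≤ √(E‖T_Ŵ - A T_z‖²)`, and by
independence the latter second moment is `m⁻² ∑ᵢ ∑_w pᵢ(w)(1 - pᵢ(w)) ≤ 1 / m ≤ D / m`.
-/

section ProductDistribution

variable {ι Z : Type*} [Fintype ι] [DecidableEq ι] [Fintype Z]

theorem sum_prod_mul_prod_apply (p F : ι → Z → ℝ) :
    ∑ v : ι → Z, (∏ k, p k (v k)) * ∏ k, F k (v k) = ∏ k, ∑ x, p k x * F k x := by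
  simp_rw [← prod_mul_distrib, Fintype.prod_sum]

variable {p : ι → Z → ℝ}

theorem sum_prod_mul_apply (hp : ∀ k, ∑ x, p k x = 1) (i : ι) (f : Z → ℝ) :
    ∑ v : ι → Z, (∏ k, p k (v k)) * f (v i) = ∑ x, p i x * f x := by
  let F : ι → Z → ℝ := fun k => if k = i then f else 1
  have hF : ∀ v : ι → Z, ∏ k, F k (v k) = f (v i) := fun v =>
    (Fintype.prod_eq_single i fun k hk => by simp [F, hk]).trans (by simp [F])
  simp_rw [← hF, sum_prod_mul_prod_apply]
  exact (Fintype.prod_eq_single i fun k hk => by simp [F, hk, hp]).trans (by simp [F])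

theorem sum_prod_mul_apply_mul_apply (hp : ∀ k, ∑ x, p k x = 1) {i j : ι} (hij : i ≠ j)
    (f g : Z → ℝ) :
    ∑ v : ι → Z, (∏ k, p k (v k)) * (f (v i) * g (v j))
      = (∑ x, p i x * f x) * ∑ x, p j x * g x := by
  let F : ι → Z → ℝ := fun k => if k = i then f else if k = j then g else 1
  have hF : ∀ v : ι → Z, ∏ k, F k (v k) = f (v i) * g (v j) := fun v =>
    (Fintype.prod_eq_mul i j hij fun k hk => by simp [F, hk]).trans (by simp [F, hij.symm])
  simp_rw [← hF, sum_prod_mul_prod_apply]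
  exact (Fintype.prod_eq_mul i j hij fun k hk => by simp [F, hk, hp]).trans
    (by simp [F, hij.symm])

-- Bienaymé's formula for independent coordinates with laws `p k`.
theorem sum_prod_mul_sum_sq_of_centered (hp : ∀ k, ∑ x, p k x = 1) (Y : ι → Z → ℝ)
    (hY : ∀ k, ∑ x, p k x * Y k x = 0) :
    ∑ v : ι → Z, (∏ k, p k (v k)) * (∑ i, Y i (v i)) ^ 2 = ∑ i, ∑ x, p i x * Y i x ^ 2 := by
  have hpair : ∀ i j, ∑ v : ι → Z, (∏ k, p k (v k)) * (Y i (v i) * Y j (v j))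
      = if j = i then ∑ x, p i x * Y i x ^ 2 else 0 := by
    intro i j
    split_ifs with hji
    · subst hji
      simp_rw [← sq]
      exact sum_prod_mul_apply hp j (Y j ^ 2)
    · rw [sum_prod_mul_apply_mul_apply hp (Ne.symm hji), hY, zero_mul]
  simp_rw [sq, sum_mul_sum, mul_sum]
  rw [sum_comm]
  refine sum_congr rfl fun i _ => ?_
  rw [sum_comm]
  simp_rw [hpair, sum_ite_eq', mem_univ, if_true, sq]

end ProductDistribution

section EmpiricalType

variable {Z : Type*} [DecidableEq Z] {m : ℕ}

theorem typeOf_eq_sum_ite (z : Fin m → Z) (a : Z) :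
    typeOf z a = (∑ i, if z i = a then (1 : ℝ) else 0) / m := by
  rw [typeOf, natCast_card_filter]

theorem sum_typeOf [Fintype Z] [NeZero m] (z : Fin m → Z) : ∑ a, typeOf z a = 1 := by
  simp_rw [typeOf_eq_sum_ite, ← sum_div]
  rw [sum_comm]
  simp [NeZero.ne m]

theorem mulVec_typeOf [Fintype Z] (M : Matrix Z Z ℝ) (z : Fin m → Z) (w : Z) :
    (M *ᵥ typeOf z) w = (∑ i, M w (z i)) / m := by
  simp_rw [mulVec, dotProduct, typeOf_eq_sum_ite, mul_div_assoc', ← sum_div, mul_sum, mul_ite,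
    mul_one, mul_zero]
  rw [sum_comm]
  simp

theorem sum_prod_mul_sum_sq_typeOf_sub_le [Fintype Z] {p : Fin m → Z → ℝ}
    (hp : ∀ k, ∑ x, p k x = 1) :
    ∑ v : Fin m → Z, (∏ k, p k (v k)) * ∑ w, (typeOf v w - (∑ i, p i w) / m) ^ 2 ≤ 1 / m := by
  let Y : Z → Fin m → Z → ℝ := fun w i x => (if x = w then 1 else 0) - p i w
  have hY : ∀ w v, typeOf v w - (∑ i, p i w) / m = (∑ i, Y w i (v i)) / m := fun w v => by
    simp only [Y, typeOf_eq_sum_ite, sum_sub_distrib, sub_div]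
  have hmean : ∀ w k, ∑ x, p k x * Y w k x = 0 := fun w k => by
    simp [Y, mul_sub, sum_sub_distrib, ← sum_mul, hp]
  have hvar : ∀ w k, ∑ x, p k x * Y w k x ^ 2 = p k w - p k w ^ 2 := fun w k => by
    have : ∀ x, p k x * Y w k x ^ 2
        = p k x * p k w ^ 2 + if x = w then p k x * (1 - 2 * p k w) else 0 := fun x => by
      by_cases hx : x = w <;> simp [Y, hx]; ring
    simp_rw [this, sum_add_distrib, ← sum_mul, hp, sum_ite_eq', mem_univ, if_true]
    ring
  calc ∑ v : Fin m → Z, (∏ k, p k (v k)) * ∑ w, (typeOf v w - (∑ i, p i w) / m) ^ 2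
      = ∑ w, (∑ i, (p i w - p i w ^ 2)) / m ^ 2 := by
        simp_rw [mul_sum]
        rw [sum_comm]
        refine sum_congr rfl fun w _ => ?_
        simp_rw [hY, div_pow, mul_div_assoc', ← sum_div,
          sum_prod_mul_sum_sq_of_centered hp _ (hmean w), hvar]
    _ ≤ ∑ w, (∑ i, p i w) / m ^ 2 := by
        gcongr with w _ i
        nlinarith [sq_nonneg (p i w)]
    _ = 1 / m := by
        rw [← sum_div, sum_comm]
        simp [hp, sq, div_self_mul_self']

end EmpiricalType

theorem sum_mul_sqrt_le_sqrt_sum_mul {α : Type*} {s : Finset α} {P S : α → ℝ}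
    (hP : ∀ a ∈ s, 0 ≤ P a) (hP1 : ∑ a ∈ s, P a = 1) (hS : ∀ a ∈ s, 0 ≤ S a) :
    ∑ a ∈ s, P a * √(S a) ≤ √(∑ a ∈ s, P a * S a) :=
  Real.strictConcaveOn_sqrt.concaveOn.le_map_sum hP hP1 hS

theorem sum_mulVec_of_sum_col_eq_one {Z : Type*} [Fintype Z] {M : Matrix Z Z ℝ}
    (hM : ∀ a, ∑ w, M w a = 1) (v : Z → ℝ) : ∑ w, (M *ᵥ v) w = ∑ a, v a := by
  simp_rw [mulVec, dotProduct]
  rw [sum_comm]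
  simp [← sum_mul, hM]

section GammaDiag

variable {Z : Type*} [Fintype Z] [DecidableEq Z] {γ : ℝ}

theorem gammaDiag_nonneg (hγ : 0 ≤ γ) (w y : Z) : 0 ≤ gammaDiag γ w y := by
  have : (1 : ℝ) ≤ Fintype.card Z := by exact_mod_cast Fintype.card_pos_iff.2 ⟨w⟩
  unfold gammaDiag
  split_ifs <;> exact div_nonneg (by linarith) (by linarith)

theorem sum_gammaDiag_left (hq : γ + Fintype.card Z - 1 ≠ 0) (y : Z) :
    ∑ w, gammaDiag γ w y = 1 := by
  have h : ∀ w, gammaDiag γ w y = ((if w = y then γ - 1 else 0) + 1) / (γ + Fintype.card Z - 1) :=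
    fun w => by unfold gammaDiag; split_ifs <;> ring
  simp_rw [h, ← sum_div, sum_add_distrib, sum_ite_eq', mem_univ, if_true, sum_const, card_univ,
    nsmul_eq_mul, mul_one]
  rw [div_eq_one_iff_eq hq]
  ring

theorem gammaDiag_mulVec_apply (v : Z → ℝ) (w : Z) :
    (of (gammaDiag γ) *ᵥ v) w = ((γ - 1) * v w + ∑ a, v a) / (γ + Fintype.card Z - 1) := by
  have h : ∀ a, gammaDiag γ w a * v a
      = ((if w = a then (γ - 1) * v a else 0) + v a) / (γ + Fintype.card Z - 1) := fun a => by
    unfold gammaDiag; split_ifs <;> ring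
  simp_rw [mulVec, dotProduct, of_apply, h, ← sum_div, sum_add_distrib, sum_ite_eq, mem_univ,
    if_true]

theorem gammaDiag_mulVec_smul (hγ : γ ≠ 1) (hq : γ + Fintype.card Z - 1 ≠ 0) {x : Z → ℝ}
    (hx : ∑ a, x a = 0) : of (gammaDiag γ) *ᵥ ((1 + Fintype.card Z / (γ - 1)) • x) = x := by
  have hγ' : γ - 1 ≠ 0 := sub_ne_zero.2 hγ
  ext w
  simp only [gammaDiag_mulVec_apply, Pi.smul_apply, smul_eq_mul, ← mul_sum, hx, mul_zero, add_zero]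
  field_simp
  ring

theorem isUnit_gammaDiag (hγ : γ ≠ 1) (hq : γ + Fintype.card Z - 1 ≠ 0) :
    IsUnit (of (gammaDiag (Z := Z) γ)) := by
  refine mulVec_injective_iff_isUnit.1 fun x y hxy => ?_
  have hγ' : γ - 1 ≠ 0 := sub_ne_zero.2 hγ
  have h : ∀ w, (γ - 1) * x w + ∑ a, x a = (γ - 1) * y w + ∑ a, y a := fun w => by
    have := congrFun hxy w
    rwa [gammaDiag_mulVec_apply, gammaDiag_mulVec_apply, div_left_inj' hq] at this
  have hsum : ∑ a, x a = ∑ a, y a := by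
    have := sum_congr rfl fun w (_ : w ∈ univ) => h w
    simp only [sum_add_distrib, ← mul_sum, sum_const, card_univ, nsmul_eq_mul] at this
    exact mul_left_cancel₀ hq (by linarith)
  ext w
  exact mul_left_cancel₀ hγ' (by linarith [h w])

theorem gammaDiag_inv_mulVec_sub (hγ : γ ≠ 1) (hq : γ + Fintype.card Z - 1 ≠ 0) {u t : Z → ℝ}
    (hut : ∑ a, u a = ∑ a, t a) :
    (of (gammaDiag γ))⁻¹ *ᵥ u - t
      = (1 + Fintype.card Z / (γ - 1)) • (u - of (gammaDiag γ) *ᵥ t) := by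
  set A := of (gammaDiag (Z := Z) γ)
  set y := (1 + Fintype.card Z / (γ - 1)) • (u - A *ᵥ t)
  have hsum : ∑ a, (u - A *ᵥ t) a = 0 := by
    simp only [Pi.sub_apply, sum_sub_distrib]
    rw [sum_mulVec_of_sum_col_eq_one (M := A) (sum_gammaDiag_left hq), hut, sub_self]
  have hAy : A *ᵥ (y + t) = u := by
    rw [mulVec_add, gammaDiag_mulVec_smul hγ hq hsum, sub_add_cancel]
  have hA : IsUnit A.det := (isUnit_iff_isUnit_det A).1 (isUnit_gammaDiag hγ hq)
  rw [← hAy, mulVec_mulVec, nonsing_inv_mul A hA, one_mulVec, add_sub_cancel_right]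

end GammaDiag

/-- Expected PRAM estimation error: if each `Ŵ_i` is independently drawn with
`P(Ŵ_i = w) = A[w, z_i]` for the γ-diagonal matrix `A`, then the estimate
`A⁻¹·T_Ŵ` of the true type satisfies `E‖A⁻¹·T_Ŵ - T_z‖₂ ≤ c·√(D/m)` with
`c = 1 + D/(γ-1)` the ℓ2 condition number of `A`. -/
theorem expected_pram_estimation_error
    {Z : Type*} [Fintype Z] [DecidableEq Z] (hD : 1 ≤ Fintype.card Z)
    (γ : ℝ) (hγ : 1 < γ) (m : ℕ) (hm : 1 ≤ m) (z : Fin m → Z) :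
    letI D : ℝ := (Fintype.card Z : ℝ)
    letI A : Matrix Z Z ℝ := Matrix.of (gammaDiag γ)
    letI c : ℝ := 1 + D / (γ - 1)
    (∑ what : Fin m → Z, (∏ i, gammaDiag γ (what i) (z i)) *
        Real.sqrt (∑ w : Z, (A⁻¹.mulVec (typeOf what) w - typeOf z w) ^ 2))
      ≤ c * Real.sqrt (D / m) := by
  have hD' : (1 : ℝ) ≤ Fintype.card Z := by exact_mod_cast hD
  have hq : γ + Fintype.card Z - 1 ≠ 0 := (by linarith : (0 : ℝ) < _).ne'
  set c : ℝ := 1 + Fintype.card Z / (γ - 1)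
  have hc : 0 ≤ c := add_nonneg zero_le_one (div_nonneg (by linarith) (by linarith))
  have hcol : ∀ i, ∑ w, gammaDiag γ w (z i) = 1 := fun i => sum_gammaDiag_left hq (z i)
  have : NeZero m := ⟨by omega⟩
  set P : (Fin m → Z) → ℝ := fun v => ∏ i, gammaDiag γ (v i) (z i)
  set S : (Fin m → Z) → ℝ := fun v => ∑ w, (typeOf v w - (∑ i, gammaDiag γ w (z i)) / m) ^ 2
  have herr : ∀ v, √(∑ w, (((of (gammaDiag γ))⁻¹ *ᵥ typeOf v) w - typeOf z w) ^ 2) = c * √(S v) :=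
    fun v => by
      have : _ = c • _ := gammaDiag_inv_mulVec_sub hγ.ne' hq (u := typeOf v) (t := typeOf z)
        (by rw [sum_typeOf, sum_typeOf])
      simp_rw [← Pi.sub_apply ((of (gammaDiag γ))⁻¹ *ᵥ _), this, Pi.smul_apply, Pi.sub_apply,
        mulVec_typeOf, of_apply, smul_eq_mul, mul_pow, ← mul_sum, Real.sqrt_mul (sq_nonneg _),
        Real.sqrt_sq hc]
      rfl
  calc _ = c * ∑ v, P v * √(S v) := by
        rw [mul_sum]
        exact sum_congr rfl fun v _ => by rw [herr, mul_left_comm]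
    _ ≤ c * √(∑ v, P v * S v) := by
        gcongr
        exact sum_mul_sqrt_le_sqrt_sum_mul
          (fun v _ => prod_nonneg fun i _ => gammaDiag_nonneg (by linarith) _ _)
          ((Fintype.prod_sum fun i w => gammaDiag γ w (z i)).symm.trans (by simp [hcol]))
          (fun v _ => sum_nonneg fun w _ => sq_nonneg _)
    _ ≤ c * √(1 / m) := by
        gcongr
        exact sum_prod_mul_sum_sq_typeOf_sub_le hcol
    _ ≤ c * √(Fintype.card Z / m) := by gcongr
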